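/- arXiv:math/9808116 — 4 statements merged into one kernel-verified Lean document; each statement's English description precedes it below -/
import Mathlib

section
/- Let D be self-adjoint with spec(D²) ⊆ {0} ∪ [N−C, ∞), N > C, and let f be a bounded operator such that the commutator [D², f] = i(D·g + g·D) for some bounded operator g (formally g = γ^μ f_{|μ}). Then for all α > 0, ‖[f, (1+αD²)^{-1}]‖ ≤ 2 (N−C)^{-1/2} ‖g‖, and consequently ‖[f, Π]‖ ≤ 2 (N−C)^{-1/2} ‖g‖ + 2α^{-1}(N−C)^{-1}‖f‖ for every α > 0, whence ‖[f, Π]‖ ≤ 2 (N−C)^{-1/2} ‖g‖, where Π is the kernel projection of D. -/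
/-!
Everything is functional calculus of the self-adjoint `D`, whose spectrum avoids `0 < s² < N - C`.
The resolvent `R = (1 + αD²)⁻¹` satisfies `[f, R] = R [1 + αD², f] R = iα R (Dg + gD) R`, and
`‖αDR‖ = sup |αs| / (1 + αs²) ≤ (N - C)^{-1/2}` over the spectrum, which gives the first bound.
The kernel projection is `q(D)` for a continuous `q` equal to `1` at `0` and vanishing on the rest
of the spectrum, so `‖Π - R‖ = sup |q(s) - 1 / (1 + αs²)| ≤ α⁻¹(N - C)⁻¹`; letting `α → ∞` gives the
last bound.
-/

open Ring in
lemma mul_ringInverse_sub_ringInverse_mul {R : Type*} [Ring R] {a : R} (ha : IsUnit a) (f : R) :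
    f * a⁻¹ʳ - a⁻¹ʳ * f = a⁻¹ʳ * (a * f - f * a) * a⁻¹ʳ := by
  calc f * a⁻¹ʳ - a⁻¹ʳ * f = a⁻¹ʳ * a * f * a⁻¹ʳ - a⁻¹ʳ * f * (a * a⁻¹ʳ) := by
        rw [inverse_mul_cancel a ha, mul_inverse_cancel a ha, one_mul, mul_one]
    _ = a⁻¹ʳ * (a * f - f * a) * a⁻¹ʳ := by noncomm_ring

lemma norm_mul_add_mul_mul_le {R : Type*} [NonUnitalNormedRing R] {d g r : R} (hr : ‖r‖ ≤ 1)
    (hdr : Commute d r) : ‖r * (d * g + g * d) * r‖ ≤ 2 * ‖d * r‖ * ‖g‖ := by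
  have hsplit : r * (d * g + g * d) * r = r * d * (g * r) + r * g * (d * r) := by noncomm_ring
  rw [hsplit, ← hdr.eq]
  calc ‖d * r * (g * r) + r * g * (d * r)‖ ≤ ‖d * r‖ * (‖g‖ * ‖r‖) + ‖r‖ * ‖g‖ * ‖d * r‖ := by
        refine (norm_add_le _ _).trans (add_le_add ?_ ?_)
        · exact (norm_mul_le _ _).trans (by gcongr; exact norm_mul_le _ _)
        · exact (norm_mul_le _ _).trans (by gcongr; exact norm_mul_le _ _)
    _ ≤ ‖d * r‖ * (‖g‖ * 1) + 1 * ‖g‖ * ‖d * r‖ := by gcongr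
    _ = 2 * ‖d * r‖ * ‖g‖ := by ring

lemma norm_commutator_le_add {R : Type*} [NonUnitalNormedRing R] (f p r : R) :
    ‖f * p - p * f‖ ≤ ‖f * r - r * f‖ + 2 * ‖p - r‖ * ‖f‖ := by
  calc ‖f * p - p * f‖ = ‖(f * r - r * f) + (f * (p - r) - (p - r) * f)‖ := by
        congr 1; noncomm_ring
    _ ≤ ‖f * r - r * f‖ + (‖f‖ * ‖p - r‖ + ‖p - r‖ * ‖f‖) := by
        refine (norm_add_le _ _).trans ?_
        gcongr
        exact norm_sub_le_of_le (norm_mul_le _ _) (norm_mul_le _ _)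
    _ = ‖f * r - r * f‖ + 2 * ‖p - r‖ * ‖f‖ := by ring

lemma IsSelfAdjoint.eq_of_mul_eq_self {R : Type*} [Mul R] [StarMul R] {p q : R}
    (hp : IsSelfAdjoint p) (hq : IsSelfAdjoint q) (hqp : q * p = p) (hpq : p * q = q) : p = q := by
  rw [← hp.star_eq, ← hqp, star_mul, hp.star_eq, hq.star_eq, hpq]

lemma le_of_forall_pos_le_add_inv_mul {x b K : ℝ} (h : ∀ α : ℝ, 0 < α → x ≤ b + α⁻¹ * K) :
    x ≤ b := by
  have hlim : Filter.Tendsto (fun α : ℝ => b + α⁻¹ * K) Filter.atTop (nhds b) := by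
    simpa using tendsto_const_nhds.add (tendsto_inv_atTop_zero.mul_const K)
  exact ge_of_tendsto hlim ((Filter.eventually_gt_atTop 0).mono h)

lemma abs_mul_mul_inv_one_add_mul_sq_le {α c s : ℝ} (hα : 0 < α) (hc : 0 < c) (hs : c ≤ s ^ 2) :
    |α * s * (1 + α * s ^ 2)⁻¹| ≤ (√c)⁻¹ := by
  have hsc : √c ≤ |s| := Real.sqrt_le_sqrt hs |>.trans_eq (Real.sqrt_sq_eq_abs s)
  have hs0 : 0 < |s| := (Real.sqrt_pos.mpr hc).trans_le hsc
  rw [abs_mul, abs_mul, abs_of_pos hα, abs_inv, abs_of_pos (show 0 < 1 + α * s ^ 2 by positivity)]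
  calc α * |s| * (1 + α * s ^ 2)⁻¹ ≤ α * |s| * (α * s ^ 2)⁻¹ := by
        gcongr
        · exact mul_pos hα (hc.trans_le hs)
        · linarith
    _ = |s|⁻¹ := by rw [← sq_abs]; field_simp
    _ ≤ (√c)⁻¹ := inv_anti₀ (Real.sqrt_pos.mpr hc) hsc

lemma one_sub_sq_mul_inv_max_eq_zero {c s : ℝ} (hc : 0 < c) (hs : c ≤ s ^ 2) :
    1 - s ^ 2 * (max (s ^ 2) c)⁻¹ = 0 := by
  rw [max_eq_left hs, mul_inv_cancel₀ (hc.trans_le hs).ne', sub_self]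

section NormedSpace

variable {𝕜 E : Type*} [NontriviallyNormedField 𝕜] [NormedAddCommGroup E] [NormedSpace 𝕜 E]
  {P D T : E →L[𝕜] E}

lemma ContinuousLinearMap.mul_eq_zero_of_range_le_ker
    (h : LinearMap.range (P : E →ₗ[𝕜] E) ≤ LinearMap.ker (D : E →ₗ[𝕜] E)) : D * P = 0 :=
  ContinuousLinearMap.ext fun x => h ⟨x, rfl⟩

lemma ContinuousLinearMap.mul_eq_self_of_range_eq_ker (hP : IsIdempotentElem P)
    (hPD : LinearMap.range (P : E →ₗ[𝕜] E) = LinearMap.ker (D : E →ₗ[𝕜] E)) (hT : D * T = 0) :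
    P * T = T :=
  ContinuousLinearMap.ext fun x =>
    (LinearMap.IsIdempotentElem.mem_range_iff (IsIdempotentElem.toLinearMap hP)).mp <| by
      rw [hPD]; exact congr($hT x)

end NormedSpace

section CStarAlgebra

variable {A : Type*} [CStarAlgebra A] {d : A} {c α : ℝ}

lemma sq_gap_of_spectrum_sq_subset (hd : IsSelfAdjoint d)
    (h : spectrum ℂ (d ^ 2) ⊆ {z : ℂ | z = 0 ∨ (z.im = 0 ∧ c ≤ z.re)}) :
    ∀ s ∈ spectrum ℝ d, s = 0 ∨ c ≤ s ^ 2 := by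
  intro s hs
  have hsq : s ^ 2 ∈ spectrum ℝ (d ^ 2) := by
    rw [← cfc_pow_id (R := ℝ) d 2, cfc_map_spectrum ..]; exact ⟨s, hs, rfl⟩
  rcases h (spectrum.algebraMap_mem ℂ hsq) with h0 | ⟨-, hre⟩
  · left; simpa using h0
  · right; simpa [sq] using hre

lemma one_add_smul_sq_eq_cfc (hd : IsSelfAdjoint d) :
    1 + (α : ℂ) • d ^ 2 = cfc (fun s : ℝ => 1 + α * s ^ 2) d := by
  rw [cfc_const_add .., cfc_const_mul .., cfc_pow_id .., Algebra.algebraMap_eq_smul_one, one_smul,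
    Complex.coe_smul]

lemma isUnit_one_add_smul_sq (hd : IsSelfAdjoint d) (hα : 0 ≤ α) :
    IsUnit (1 + (α : ℂ) • d ^ 2) := by
  rw [one_add_smul_sq_eq_cfc hd]
  exact (isUnit_cfc_iff _ d).mpr fun s _ => by positivity

lemma inverse_one_add_smul_sq_eq_cfc (hd : IsSelfAdjoint d) (hα : 0 ≤ α) :
    Ring.inverse (1 + (α : ℂ) • d ^ 2) = cfc (fun s : ℝ => (1 + α * s ^ 2)⁻¹) d := by
  rw [one_add_smul_sq_eq_cfc hd, cfc_inv (fun s : ℝ => 1 + α * s ^ 2) d fun s _ => by positivity]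

lemma norm_cfc_inv_one_add_mul_sq_le_one (hα : 0 ≤ α) :
    ‖cfc (fun s : ℝ => (1 + α * s ^ 2)⁻¹) d‖ ≤ 1 :=
  norm_cfc_le zero_le_one fun s _ => by
    rw [Real.norm_of_nonneg (by positivity)]
    exact inv_le_one_of_one_le₀ (by nlinarith [sq_nonneg s])

lemma norm_smul_mul_cfc_inv_one_add_mul_sq_le (hd : IsSelfAdjoint d) (hc : 0 < c)
    (hgap : ∀ s ∈ spectrum ℝ d, s = 0 ∨ c ≤ s ^ 2) (hα : 0 < α) :
    ‖α • (d * cfc (fun s : ℝ => (1 + α * s ^ 2)⁻¹) d)‖ ≤ (√c)⁻¹ := by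
  have hcont : Continuous fun s : ℝ => (1 + α * s ^ 2)⁻¹ :=
    Continuous.inv₀ (by fun_prop) fun s => by positivity
  have hcfc : α • (d * cfc (fun s : ℝ => (1 + α * s ^ 2)⁻¹) d)
      = cfc (fun s : ℝ => α * s * (1 + α * s ^ 2)⁻¹) d := by
    rw [cfc_mul (fun s : ℝ => α * s) _ d (by fun_prop) hcont.continuousOn, cfc_const_mul_id ..,
      smul_mul_assoc]
  rw [hcfc]
  refine norm_cfc_le (by positivity) fun s hs => ?_
  rcases hgap s hs with rfl | hs2
  · simp
  · exact (Real.norm_eq_abs _).trans_le (abs_mul_mul_inv_one_add_mul_sq_le hα hc hs2)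

theorem norm_commutator_inverse_one_add_smul_sq_le (hd : IsSelfAdjoint d) (hc : 0 < c)
    (hgap : ∀ s ∈ spectrum ℝ d, s = 0 ∨ c ≤ s ^ 2) {f g : A}
    (hcomm : d ^ 2 * f - f * d ^ 2 = Complex.I • (d * g + g * d)) (hα : 0 < α) :
    ‖f * Ring.inverse (1 + (α : ℂ) • d ^ 2) - Ring.inverse (1 + (α : ℂ) • d ^ 2) * f‖
      ≤ 2 * (√c)⁻¹ * ‖g‖ := by
  have hcomm' : (1 + (α : ℂ) • d ^ 2) * f - f * (1 + (α : ℂ) • d ^ 2)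
      = ((α : ℂ) * Complex.I) • (d * g + g * d) := by
    rw [mul_smul, ← hcomm, smul_sub, add_mul, mul_add, one_mul, mul_one, smul_mul_assoc,
      mul_smul_comm]
    abel
  rw [mul_ringInverse_sub_ringInverse_mul (isUnit_one_add_smul_sq hd hα.le), hcomm',
    inverse_one_add_smul_sq_eq_cfc hd hα.le]
  set r := cfc (fun s : ℝ => (1 + α * s ^ 2)⁻¹) d
  have hdr : Commute d r := ((Commute.refl d).cfc_real _).symm
  calc ‖r * (((α : ℂ) * Complex.I) • (d * g + g * d)) * r‖
        = α * ‖r * (d * g + g * d) * r‖ := by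
        rw [mul_smul_comm, smul_mul_assoc, norm_smul, norm_mul, Complex.norm_I, mul_one,
          Complex.norm_real, Real.norm_of_nonneg hα.le]
    _ ≤ α * (2 * ‖d * r‖ * ‖g‖) :=
        mul_le_mul_of_nonneg_left (norm_mul_add_mul_mul_le
          (norm_cfc_inv_one_add_mul_sq_le_one hα.le) hdr) hα.le
    _ = 2 * ‖α • (d * r)‖ * ‖g‖ := by rw [norm_smul, Real.norm_of_nonneg hα.le]; ring
    _ ≤ 2 * (√c)⁻¹ * ‖g‖ := by
        gcongr; exact norm_smul_mul_cfc_inv_one_add_mul_sq_le hd hc hgap hα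

/-- The function is `1` at `0` and `0` where `c ≤ s ^ 2`: when the spectrum of `d` has this gap,
this is the orthogonal projection onto the kernel of `d`. -/
noncomputable def gapProjection (c : ℝ) (d : A) : A :=
  cfc (fun s : ℝ => 1 - s ^ 2 * (max (s ^ 2) c)⁻¹) d

lemma isSelfAdjoint_gapProjection : IsSelfAdjoint (gapProjection c d) :=
  cfc_predicate _ d

lemma continuous_inv_max_sq (hc : 0 < c) : Continuous fun s : ℝ => (max (s ^ 2) c)⁻¹ :=
  Continuous.inv₀ (by fun_prop) fun _ => (hc.trans_le (le_max_right _ _)).ne'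

lemma gapProjection_mul_of_mul_eq_zero (hd : IsSelfAdjoint d) (hc : 0 < c) {x : A}
    (hx : d * x = 0) : gapProjection c d * x = x := by
  have hk := continuous_inv_max_sq hc
  have hQ : gapProjection c d = 1 - cfc (fun s : ℝ => (max (s ^ 2) c)⁻¹) d * d ^ 2 := by
    simp_rw [gapProjection, mul_comm _ (max _ c)⁻¹]
    rw [cfc_sub (fun _ : ℝ => (1 : ℝ)) _ d, cfc_const_one ..,
      cfc_mul _ (· ^ 2 : ℝ → ℝ) d hk.continuousOn (by fun_prop), cfc_pow_id ..]
  rw [hQ, sub_mul, one_mul, mul_assoc, sq, mul_assoc, hx, mul_zero, mul_zero, sub_zero]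

lemma mul_gapProjection_eq_zero (hd : IsSelfAdjoint d)
    (hc : 0 < c) (hgap : ∀ s ∈ spectrum ℝ d, s = 0 ∨ c ≤ s ^ 2) : d * gapProjection c d = 0 := by
  have hq : Continuous fun s : ℝ => 1 - s ^ 2 * (max (s ^ 2) c)⁻¹ :=
    continuous_const.sub ((continuous_pow 2).mul (continuous_inv_max_sq hc))
  nth_rw 1 [gapProjection, ← cfc_id' ℝ d]
  rw [← cfc_mul (fun s : ℝ => s) _ d (by fun_prop) hq.continuousOn, ← cfc_zero ℝ d]
  refine cfc_congr fun s hs => ?_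
  rcases hgap s hs with rfl | hs2
  · simp
  · simp [one_sub_sq_mul_inv_max_eq_zero hc hs2]

lemma norm_gapProjection_sub_cfc_inv_one_add_mul_sq_le (hc : 0 < c)
    (hgap : ∀ s ∈ spectrum ℝ d, s = 0 ∨ c ≤ s ^ 2) (hα : 0 < α) :
    ‖gapProjection c d - cfc (fun s : ℝ => (1 + α * s ^ 2)⁻¹) d‖ ≤ α⁻¹ * c⁻¹ := by
  have hq : Continuous fun s : ℝ => 1 - s ^ 2 * (max (s ^ 2) c)⁻¹ :=
    continuous_const.sub ((continuous_pow 2).mul (continuous_inv_max_sq hc))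
  have hr : Continuous fun s : ℝ => (1 + α * s ^ 2)⁻¹ :=
    Continuous.inv₀ (by fun_prop) fun s => by positivity
  rw [gapProjection, ← cfc_sub _ _ d hq.continuousOn hr.continuousOn]
  refine norm_cfc_le (by positivity) fun s hs => ?_
  rcases hgap s hs with rfl | hs2
  · simp; positivity
  · rw [one_sub_sq_mul_inv_max_eq_zero hc hs2, zero_sub, norm_neg,
      Real.norm_of_nonneg (by positivity), ← mul_inv]
    exact inv_anti₀ (by positivity) (by nlinarith)

end CStarAlgebra

/-- Commutator estimate: if `D` is self-adjoint with `spec(D²) ⊆ {0} ∪ [N−C, ∞)` and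
`[D², f] = i(Dg + gD)` for bounded `f, g`, then `‖[f, (1+αD²)⁻¹]‖ ≤ 2(N−C)^{-1/2}‖g‖`
for all `α > 0`, hence `‖[f, Π]‖ ≤ 2(N−C)^{-1/2}‖g‖ + 2α⁻¹(N−C)⁻¹‖f‖` for every `α > 0`,
whence `‖[f, Π]‖ ≤ 2(N−C)^{-1/2}‖g‖`, where `Π` is the kernel projection of `D`. -/
theorem commutator_kernel_projection_bound
    {H : Type*} [NormedAddCommGroup H] [InnerProductSpace ℂ H] [CompleteSpace H]
    (D : H →L[ℂ] H) (hD : IsSelfAdjoint D)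
    (N C : ℝ) (hNC : C < N)
    (hspec : spectrum ℂ (D ^ 2) ⊆
      {z : ℂ | z = 0 ∨ (z.im = 0 ∧ N - C ≤ z.re)})
    (f g : H →L[ℂ] H)
    (hcomm : D ^ 2 * f - f * D ^ 2 = Complex.I • (D * g + g * D))
    (Pr : H →L[ℂ] H) (hPidem : IsIdempotentElem Pr) (hPsa : IsSelfAdjoint Pr)
    (hPrange : LinearMap.range (Pr : H →ₗ[ℂ] H) = LinearMap.ker (D : H →ₗ[ℂ] H)) :
    (∀ α : ℝ, 0 < α →
      ‖f * Ring.inverse (1 + (α : ℂ) • D ^ 2)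
        - Ring.inverse (1 + (α : ℂ) • D ^ 2) * f‖ ≤ 2 * (Real.sqrt (N - C))⁻¹ * ‖g‖) ∧
    (∀ α : ℝ, 0 < α →
      ‖f * Pr - Pr * f‖ ≤ 2 * (Real.sqrt (N - C))⁻¹ * ‖g‖ + 2 * α⁻¹ * (N - C)⁻¹ * ‖f‖) ∧
    ‖f * Pr - Pr * f‖ ≤ 2 * (Real.sqrt (N - C))⁻¹ * ‖g‖ := by
  have hc : 0 < N - C := sub_pos.mpr hNC
  have hgap := sq_gap_of_spectrum_sq_subset hD hspec
  have hres (α : ℝ) (hα : 0 < α) := norm_commutator_inverse_one_add_smul_sq_le hD hc hgap hcomm hα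
  have hPr : Pr = gapProjection (N - C) D :=
    hPsa.eq_of_mul_eq_self isSelfAdjoint_gapProjection
      (gapProjection_mul_of_mul_eq_zero hD hc
        (ContinuousLinearMap.mul_eq_zero_of_range_le_ker hPrange.le))
      (ContinuousLinearMap.mul_eq_self_of_range_eq_ker hPidem hPrange
        (mul_gapProjection_eq_zero hD hc hgap))
  have hproj (α : ℝ) (hα : 0 < α) :
      ‖f * Pr - Pr * f‖ ≤ 2 * (√(N - C))⁻¹ * ‖g‖ + 2 * α⁻¹ * (N - C)⁻¹ * ‖f‖ := by
    have hPR : ‖Pr - Ring.inverse (1 + (α : ℂ) • D ^ 2)‖ ≤ α⁻¹ * (N - C)⁻¹ := by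
      rw [hPr, inverse_one_add_smul_sq_eq_cfc hD hα.le]
      exact norm_gapProjection_sub_cfc_inv_one_add_mul_sq_le hc hgap hα
    set R := Ring.inverse (1 + (α : ℂ) • D ^ 2)
    calc ‖f * Pr - Pr * f‖ ≤ ‖f * R - R * f‖ + 2 * ‖Pr - R‖ * ‖f‖ :=
          norm_commutator_le_add f Pr R
      _ ≤ 2 * (√(N - C))⁻¹ * ‖g‖ + 2 * (α⁻¹ * (N - C)⁻¹) * ‖f‖ := by gcongr; exact hres α hα
      _ = 2 * (√(N - C))⁻¹ * ‖g‖ + 2 * α⁻¹ * (N - C)⁻¹ * ‖f‖ := by ring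
  exact ⟨hres, hproj, le_of_forall_pos_le_add_inv_mul (K := 2 * (N - C)⁻¹ * ‖f‖) fun α hα =>
    (hproj α hα).trans_eq (by ring)⟩
end

section
/- Let (A_N)_{N∈ℕ} be a sequence of C*-algebras and T_N : C(M) → A_N unital positive (hence norm-contracting) linear maps with each T_N surjective onto A_N in the sense that the images generate. Suppose for all f, g ∈ C(M), ‖T_N(f)T_N(g) − T_N(fg)‖ → 0 as N → ∞. Then the set A := Im T + ⊕_N A_N (where T is the direct product of the T_N inside ∏_N A_N and ⊕ is the c₀-direct sum) is a C*-subalgebra of ∏_N A_N. -/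
/-!
Let `c₀ ⊆ ∏ A_N` be the ideal of sequences whose norms tend to zero. Modulo `c₀` the map `T`
becomes a unital `*`-homomorphism `ψ : C(M) → ∏ A_N / c₀`, and `Im T + c₀` is the preimage of
`Im ψ` under the quotient map. The quotient norm is `limsup ‖x_N‖`, which satisfies the
C*-identity, so `∏ A_N / c₀` is a C*-algebra. A `*`-homomorphism out of `C(X)`, `X` compact
Hausdorff (which covers `C(M)` through Gelfand duality), factors through restriction to the
closed set `K` cut out by its kernel, and the induced map on `C(K)` is injective, hence
isometric; so its range is closed, and so is `Im T + c₀`.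
-/

open scoped ENNReal
open Filter Topology

namespace Ideal.Quotient

variable {R : Type*} [SeminormedRing R] (I : Ideal R) [I.IsTwoSided]

theorem norm_mul_le_of_isTwoSided (x y : R ⧸ I) : ‖x * y‖ ≤ ‖x‖ * ‖y‖ := by
  have bound : ∀ δ > 0, ‖x * y‖ ≤ (‖x‖ + δ) * (‖y‖ + δ) := fun δ hδ => by
    obtain ⟨a, rfl, ha⟩ := Submodule.Quotient.norm_mk_lt (S := I) x hδ
    obtain ⟨b, rfl, hb⟩ := Submodule.Quotient.norm_mk_lt (S := I) y hδ
    calc ‖mk I a * mk I b‖ = ‖mk I (a * b)‖ := by rw [map_mul]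
      _ ≤ ‖a * b‖ := Submodule.Quotient.norm_mk_le _ _
      _ ≤ ‖a‖ * ‖b‖ := norm_mul_le a b
      _ ≤ _ := by gcongr
  have hcont : Continuous fun δ : ℝ => (‖x‖ + δ) * (‖y‖ + δ) := by fun_prop
  have hlim : Tendsto (fun δ => (‖x‖ + δ) * (‖y‖ + δ)) (𝓝[>] 0) (𝓝 (‖x‖ * ‖y‖)) := by
    simpa using (hcont.tendsto 0).mono_left nhdsWithin_le_nhds
  exact ge_of_tendsto hlim (eventually_nhdsWithin_of_forall bound)

noncomputable instance instSeminormedRing : SeminormedRing (R ⧸ I) where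
  dist_eq := dist_eq_norm_neg_add
  norm_mul_le := norm_mul_le_of_isTwoSided I

noncomputable instance instNormedRing [IsClosed (I : Set R)] : NormedRing (R ⧸ I) :=
  { instSeminormedRing I, Submodule.Quotient.normedAddCommGroup I with }

noncomputable instance instNormedAlgebra (𝕜 : Type*) [NormedField 𝕜] [NormedAlgebra 𝕜 R] :
    NormedAlgebra 𝕜 (R ⧸ I) :=
  { Submodule.Quotient.normedSpace I 𝕜, Ideal.Quotient.algebra 𝕜 with }

end Ideal.Quotient

namespace StarAlgHom

section LiftOfSurjective

variable {R A B C : Type*} [CommSemiring R] [Ring A] [Ring B] [Ring C]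
  [Algebra R A] [Algebra R B] [Algebra R C] [StarRing A] [StarRing B] [StarRing C]

theorem apply_eq_of_apply_eq (r : A →⋆ₐ[R] C) (ψ : A →⋆ₐ[R] B) (h : ∀ a, r a = 0 → ψ a = 0)
    {a b : A} (hab : r a = r b) : ψ a = ψ b :=
  sub_eq_zero.mp (by rw [← map_sub]; exact h _ (by rw [map_sub, hab, sub_self]))

variable (r : A →⋆ₐ[R] C) (hr : Function.Surjective r) (ψ : A →⋆ₐ[R] B)
  (h : ∀ a, r a = 0 → ψ a = 0)

noncomputable def liftOfSurjective : C →⋆ₐ[R] B where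
  toFun c := ψ (Function.surjInv hr c)
  map_one' := by
    rw [apply_eq_of_apply_eq r ψ h (b := 1) (by simp [Function.surjInv_eq hr]), map_one]
  map_mul' c d := by
    rw [← map_mul]
    exact apply_eq_of_apply_eq r ψ h (by simp [Function.surjInv_eq hr])
  map_zero' := by
    rw [apply_eq_of_apply_eq r ψ h (b := 0) (by simp [Function.surjInv_eq hr]), map_zero]
  map_add' c d := by
    rw [← map_add]
    exact apply_eq_of_apply_eq r ψ h (by simp [Function.surjInv_eq hr])
  commutes' c := by
    rw [apply_eq_of_apply_eq r ψ h (b := algebraMap R A c)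
      (by simp [Function.surjInv_eq hr, AlgHomClass.commutes]), AlgHomClass.commutes]
  map_star' c := by
    rw [← map_star]
    exact apply_eq_of_apply_eq r ψ h (by simp [Function.surjInv_eq hr, map_star])

theorem liftOfSurjective_apply (a : A) : liftOfSurjective r hr ψ h (r a) = ψ a :=
  apply_eq_of_apply_eq r ψ h (Function.surjInv_eq hr _)

theorem range_liftOfSurjective : Set.range (liftOfSurjective r hr ψ h) = Set.range ψ := by
  rw [← hr.range_comp]
  exact congrArg Set.range (funext (liftOfSurjective_apply r hr ψ h))

theorem liftOfSurjective_injective (h' : ∀ a, ψ a = 0 → r a = 0) :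
    Function.Injective (liftOfSurjective r hr ψ h) := by
  refine (injective_iff_map_eq_zero _).mpr fun c hc => ?_
  obtain ⟨a, rfl⟩ := hr c
  exact h' a (by rwa [liftOfSurjective_apply] at hc)

end LiftOfSurjective

open ContinuousMap CStarAlgebra

theorem isClosed_range_of_continuousMap {X B : Type*} [TopologicalSpace X] [CompactSpace X]
    [T2Space X] [CStarAlgebra B] (ψ : C(X, ℂ) →⋆ₐ[ℂ] B) : IsClosed (Set.range ψ) := by
  set K : Set X := (setOfIdeal (RingHom.ker ψ))ᶜ
  have hK : IsClosed K := (setOfIdeal_open _).isClosed_compl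
  have : CompactSpace K := isCompact_iff_compactSpace.mp hK.isCompact
  let r : C(X, ℂ) →⋆ₐ[ℂ] C(K, ℂ) := compStarAlgHom' ℂ ℂ ⟨Subtype.val, continuous_subtype_val⟩
  have hr : Function.Surjective r := fun g => exists_restrict_eq hK g
  have hker : ∀ f, r f = 0 ↔ ψ f = 0 := fun f => by
    have hψ : IsClosed (RingHom.ker ψ : Set C(X, ℂ)) :=
      isClosed_singleton.preimage (map_continuous ψ)
    calc r f = 0 ↔ ∀ x ∈ K, f x = 0 := by simp [r, ContinuousMap.ext_iff]
      _ ↔ f ∈ idealOfSet ℂ (setOfIdeal (RingHom.ker ψ)) := mem_idealOfSet.symm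
      _ ↔ ψ f = 0 := by rw [idealOfSet_ofIdeal_isClosed hψ, RingHom.mem_ker]
  rw [← range_liftOfSurjective r hr ψ (fun f => (hker f).mp)]
  exact (NonUnitalStarAlgHom.isometry _ (liftOfSurjective_injective r hr ψ _
    fun f => (hker f).mpr)).isClosedEmbedding.isClosed_range

theorem isClosed_range {A B : Type*} [CommCStarAlgebra A] [CStarAlgebra B] (ψ : A →⋆ₐ[ℂ] B) :
    IsClosed (Set.range ψ) := by
  rw [← (gelfandStarTransform A).symm.surjective.range_comp]
  exact isClosed_range_of_continuousMap
    (ψ.comp ((gelfandStarTransform A).symm : C(WeakDual.characterSpace ℂ A, ℂ) →⋆ₐ[ℂ] A))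

end StarAlgHom

namespace lp

variable {ι : Type*} (A : ι → Type*) [∀ i, NormedRing (A i)] [∀ i, NormOneClass (A i)]
  (l : Filter ι)

noncomputable def tendstoZeroIdeal : Ideal (lp A ∞) where
  carrier := {x | Tendsto (fun i => ‖x i‖) l (𝓝 0)}
  add_mem' {x y} hx hy := squeeze_zero (fun _ => norm_nonneg _)
    (fun i => norm_add_le (x i) (y i)) (by simpa using hx.add hy)
  zero_mem' := by simpa using tendsto_const_nhds
  smul_mem' c x hx := squeeze_zero (fun _ => norm_nonneg _)
    (fun i => (norm_mul_le (c i) (x i)).trans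
      (mul_le_mul_of_nonneg_right (norm_apply_le_norm ENNReal.top_ne_zero c i) (norm_nonneg _)))
    (by simpa using hx.const_mul ‖c‖)

variable {A l}

theorem mem_tendstoZeroIdeal {x : lp A ∞} :
    x ∈ tendstoZeroIdeal A l ↔ Tendsto (fun i => ‖x i‖) l (𝓝 0) := Iff.rfl

theorem mem_tendstoZeroIdeal_iff_eventually_lt {x : lp A ∞} :
    x ∈ tendstoZeroIdeal A l ↔ ∀ ε > 0, ∀ᶠ i in l, ‖x i‖ < ε := by
  simp [mem_tendstoZeroIdeal, Metric.tendsto_nhds]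

instance : (tendstoZeroIdeal A l).IsTwoSided where
  mul_mem_of_left b hx := squeeze_zero (fun _ => norm_nonneg _)
    (fun i => (norm_mul_le _ (b i)).trans
      (mul_le_mul_of_nonneg_left (norm_apply_le_norm ENNReal.top_ne_zero b i) (norm_nonneg _)))
    (by simpa using hx.mul_const ‖b‖)

instance isClosed_tendstoZeroIdeal : IsClosed (tendstoZeroIdeal A l : Set (lp A ∞)) := by
  refine isClosed_of_closure_subset fun x hx =>
    mem_tendstoZeroIdeal_iff_eventually_lt.mpr fun ε hε => ?_
  obtain ⟨y, hy, hxy⟩ := Metric.mem_closure_iff.mp hx (ε / 2) (half_pos hε)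
  filter_upwards [mem_tendstoZeroIdeal_iff_eventually_lt.mp hy (ε / 2) (half_pos hε)] with i hi
  calc ‖x i‖ ≤ ‖(x - y) i‖ + ‖y i‖ := norm_le_norm_sub_add _ _
    _ ≤ ‖x - y‖ + ‖y i‖ := by gcongr; exact norm_apply_le_norm ENNReal.top_ne_zero _ i
    _ < ε := by rw [← dist_eq_norm]; linarith

local notation "π" => Ideal.Quotient.mk (tendstoZeroIdeal A l)

theorem norm_mk_le_of_eventually_le {x : lp A ∞} {c : ℝ} (hc : 0 ≤ c)
    (h : ∀ᶠ i in l, ‖x i‖ ≤ c) : ‖π x‖ ≤ c := by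
  classical
  let t : lp A ∞ := ⟨fun i => if c < ‖x i‖ then x i else 0,
    (lp.memℓp x).mono' fun i => by split_ifs <;> simp⟩
  have ht : t ∈ tendstoZeroIdeal A l := tendsto_const_nhds.congr' <| h.mono fun i hi => by
    simp [t, not_lt.mpr hi]
  have hxt : π x = π (x - t) := by
    rw [map_sub, Ideal.Quotient.eq_zero_iff_mem.mpr ht, sub_zero]
  rw [hxt]
  refine (Submodule.Quotient.norm_mk_le _ _).trans (norm_le_of_forall_le hc fun i => ?_)
  change ‖x i - (if c < ‖x i‖ then x i else 0)‖ ≤ c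
  split_ifs with hi
  · simpa using hc
  · simpa using not_lt.mp hi

theorem eventually_norm_lt_norm_mk_add (x : lp A ∞) {ε : ℝ} (hε : 0 < ε) :
    ∀ᶠ i in l, ‖x i‖ < ‖π x‖ + ε := by
  obtain ⟨y, hy, hyx⟩ :=
    Submodule.Quotient.norm_mk_lt (S := tendstoZeroIdeal A l) (π x) (half_pos hε)
  have hxy : x - y ∈ tendstoZeroIdeal A l := Ideal.Quotient.eq.mp hy.symm
  filter_upwards [mem_tendstoZeroIdeal_iff_eventually_lt.mp hxy (ε / 2) (half_pos hε)] with i hi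
  calc ‖x i‖ ≤ ‖(x - y) i‖ + ‖y i‖ := norm_le_norm_sub_add _ _
    _ ≤ ‖(x - y) i‖ + ‖y‖ := by gcongr; exact norm_apply_le_norm ENNReal.top_ne_zero _ i
    _ < ‖π x‖ + ε := by linarith

theorem continuous_mk : Continuous π := continuous_quot_mk

section Star

variable [∀ i, StarRing (A i)] [∀ i, CStarRing (A i)]

theorem star_mem_tendstoZeroIdeal {x : lp A ∞} (hx : x ∈ tendstoZeroIdeal A l) :
    star x ∈ tendstoZeroIdeal A l := by
  simpa [mem_tendstoZeroIdeal, lp.star_apply] using hx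

noncomputable instance : Star (lp A ∞ ⧸ tendstoZeroIdeal A l) where
  star := Quotient.map' star fun x y h => (Submodule.quotientRel_def _).mpr <| by
    simpa [star_sub] using star_mem_tendstoZeroIdeal ((Submodule.quotientRel_def _).mp h)

theorem star_mk (x : lp A ∞) : star (π x) = π (star x) := rfl

noncomputable instance : StarRing (lp A ∞ ⧸ tendstoZeroIdeal A l) where
  star_involutive a := by
    obtain ⟨x, rfl⟩ := Ideal.Quotient.mk_surjective a
    rw [star_mk, star_mk, star_star]
  star_mul a b := by
    obtain ⟨x, rfl⟩ := Ideal.Quotient.mk_surjective a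
    obtain ⟨y, rfl⟩ := Ideal.Quotient.mk_surjective b
    simp only [← map_mul, star_mk, star_mul]
  star_add a b := by
    obtain ⟨x, rfl⟩ := Ideal.Quotient.mk_surjective a
    obtain ⟨y, rfl⟩ := Ideal.Quotient.mk_surjective b
    simp only [← map_add, star_mk, star_add]

instance : CStarRing (lp A ∞ ⧸ tendstoZeroIdeal A l) where
  norm_mul_self_le a := by
    obtain ⟨x, rfl⟩ := Ideal.Quotient.mk_surjective a
    rw [star_mk, ← map_mul]
    refine le_of_forall_pos_le_add fun ε hε => ?_
    have hsqrt : ‖π x‖ ≤ √(‖π (star x * x)‖ + ε) := by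
      refine norm_mk_le_of_eventually_le (Real.sqrt_nonneg _) ?_
      filter_upwards [eventually_norm_lt_norm_mk_add (star x * x) hε] with i hi
      refine Real.le_sqrt_of_sq_le ?_
      rw [sq, ← CStarRing.norm_star_mul_self]
      simpa [lp.infty_coeFn_mul, lp.star_apply] using hi.le
    calc ‖π x‖ * ‖π x‖ ≤ √(‖π (star x * x)‖ + ε) * √(‖π (star x * x)‖ + ε) := by gcongr
      _ = _ := Real.mul_self_sqrt (by positivity)

variable [∀ i, NormedAlgebra ℂ (A i)] [∀ i, StarModule ℂ (A i)]

instance : StarModule ℂ (lp A ∞ ⧸ tendstoZeroIdeal A l) where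
  star_smul c a := by
    obtain ⟨x, rfl⟩ := Ideal.Quotient.mk_surjective a
    change π (star (c • x)) = star c • π (star x)
    rw [star_smul]
    rfl

noncomputable instance [∀ i, CompleteSpace (A i)] :
    CStarAlgebra (lp A ∞ ⧸ tendstoZeroIdeal A l) where

variable (A l) in
noncomputable def mkStarAlgHom : lp A ∞ →⋆ₐ[ℂ] lp A ∞ ⧸ tendstoZeroIdeal A l :=
  { Ideal.Quotient.mkₐ ℂ (tendstoZeroIdeal A l) with map_star' := star_mk }

variable {C : Type*} [Ring C] [StarRing C] [Algebra ℂ C] (T : C →ₗ[ℂ] lp A ∞) (hone : T 1 = 1)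
  (hstar : ∀ f, T (star f) = star (T f))
  (hmul : ∀ f g, T f * T g - T (f * g) ∈ tendstoZeroIdeal A l)

noncomputable def asymptoticStarAlgHom : C →⋆ₐ[ℂ] lp A ∞ ⧸ tendstoZeroIdeal A l where
  toFun f := π (T f)
  map_one' := by rw [hone, map_one]
  map_mul' f g := by
    rw [← map_mul]
    exact (Ideal.Quotient.eq.mpr (hmul f g)).symm
  map_zero' := by rw [map_zero, map_zero]
  map_add' f g := by rw [map_add, map_add]
  commutes' c := by
    rw [Algebra.algebraMap_eq_smul_one, map_smul, hone, ← Algebra.algebraMap_eq_smul_one,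
      Ideal.Quotient.mk_algebraMap]
  map_star' f := by rw [hstar, star_mk]

theorem mem_comap_range_asymptoticStarAlgHom {x : lp A ∞} :
    x ∈ (asymptoticStarAlgHom T hone hstar hmul).range.comap (mkStarAlgHom A l) ↔
      ∃ f, ∃ y ∈ tendstoZeroIdeal A l, x = T f + y := by
  change (∃ f, π (T f) = π x) ↔ _
  refine exists_congr fun f => ⟨fun h => ⟨x - T f, Ideal.Quotient.eq.mp h.symm, by abel⟩, ?_⟩
  rintro ⟨y, hy, rfl⟩
  exact Ideal.Quotient.eq.mpr (by simpa using neg_mem hy)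

end Star

end lp

theorem toeplitz_image_plus_compacts_is_cstar_subalgebra_general
    {M : Type*} [TopologicalSpace M] [CompactSpace M]
    {A : ℕ → Type*} [∀ N, NormedRing (A N)] [∀ N, StarRing (A N)]
    [∀ N, CStarRing (A N)] [∀ N, NormedAlgebra ℂ (A N)] [∀ N, CompleteSpace (A N)]
    [∀ N, StarModule ℂ (A N)] [∀ N, NormOneClass (A N)]
    (T : C(M, ℂ) →ₗ[ℂ] lp A ∞)
    (hTone : ((T 1 : lp A ∞) : ∀ N, A N) = fun N => 1)
    (hTstar : ∀ f : C(M, ℂ), T (star f) = star (T f))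
    (hTmul : ∀ f g : C(M, ℂ),
      Filter.Tendsto
        (fun N => ‖((T f : lp A ∞) : ∀ N, A N) N * ((T g : lp A ∞) : ∀ N, A N) N
          - ((T (f * g) : lp A ∞) : ∀ N, A N) N‖)
        Filter.atTop (nhds 0)) :
    ∃ S : StarSubalgebra ℂ (lp A ∞),
      (S : Set (lp A ∞)) =
        {x : lp A ∞ | ∃ (f : C(M, ℂ)) (y : lp A ∞),
          Filter.Tendsto (fun N => ‖(y : ∀ N, A N) N‖) Filter.atTop (nhds 0)
            ∧ x = T f + y} ∧
      IsClosed (S : Set (lp A ∞)) := by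
  have hone : T 1 = 1 := lp.ext hTone
  have hmul : ∀ f g, T f * T g - T (f * g) ∈ lp.tendstoZeroIdeal A atTop := hTmul
  let ψ := lp.asymptoticStarAlgHom T hone hTstar hmul
  refine ⟨ψ.range.comap (lp.mkStarAlgHom A atTop), ?_,
    (StarAlgHom.isClosed_range ψ).preimage lp.continuous_mk⟩
  ext x
  exact lp.mem_comap_range_asymptoticStarAlgHom T hone hTstar hmul

/-- Toeplitz-type quantization: if `T_N : C(M) → A_N` are unital norm-contracting linear maps
(the components of `T`) which are asymptotically multiplicative and star-preserving, then
`A := Im T + ⊕_N A_N` (sum of the image of `T` and the c₀-direct sum inside the bounded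
product `∏_N A_N`) is a (closed, star-closed) C*-subalgebra of `∏_N A_N`. -/
theorem toeplitz_image_plus_compacts_is_cstar_subalgebra
    {M : Type*} [TopologicalSpace M] [CompactSpace M]
    {A : ℕ → Type*} [∀ N, NormedRing (A N)] [∀ N, StarRing (A N)]
    [∀ N, CStarRing (A N)] [∀ N, NormedAlgebra ℂ (A N)] [∀ N, CompleteSpace (A N)]
    [∀ N, StarModule ℂ (A N)] [∀ N, NormOneClass (A N)]
    (T : C(M, ℂ) →ₗ[ℂ] lp A ∞)
    (hTone : ((T 1 : lp A ∞) : ∀ N, A N) = fun N => 1)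
    (hTcontr : ∀ (f : C(M, ℂ)) (N : ℕ), ‖((T f : lp A ∞) : ∀ N, A N) N‖ ≤ ‖f‖)
    (hTstar : ∀ f : C(M, ℂ), T (star f) = star (T f))
    (hTmul : ∀ f g : C(M, ℂ),
      Filter.Tendsto
        (fun N => ‖((T f : lp A ∞) : ∀ N, A N) N * ((T g : lp A ∞) : ∀ N, A N) N
          - ((T (f * g) : lp A ∞) : ∀ N, A N) N‖)
        Filter.atTop (nhds 0)) :
    ∃ S : StarSubalgebra ℂ (lp A ∞),
      (S : Set (lp A ∞)) =
        {x : lp A ∞ | ∃ (f : C(M, ℂ)) (y : lp A ∞),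
          Filter.Tendsto (fun N => ‖(y : ∀ N, A N) N‖) Filter.atTop (nhds 0)
            ∧ x = T f + y} ∧
      IsClosed (S : Set (lp A ∞)) :=
  toeplitz_image_plus_compacts_is_cstar_subalgebra_general T hTone hTstar hTmul
end

section
/- With A and A₀ = ⊕_N A_N as above, if additionally each A_N carries a normalized trace tr̃_N with tr̃_N(1)=1, and there is a state tr̃_∞ on A vanishing on A₀ such that tr̃_∞(T(f)) = (1/vol M) ∫_M f dμ for a strictly positive measure μ on M, then the induced *-homomorphism C(M) → A/A₀ (sending f to the class of T(f)) is injective, hence an isomorphism onto A/A₀. -/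
open scoped ENNReal

/-- If additionally there is a state `tr∞` on `A` vanishing on `A₀ = ⊕ A_N` with
`tr∞(T f) = (vol M)⁻¹ ∫ f dμ` for a strictly positive measure `μ`, then the induced
`*`-homomorphism `C(M) → A/A₀`, `f ↦ T(f) mod A₀`, is injective (hence an isomorphism
onto `A/A₀`): i.e. `T f ∈ A₀` implies `f = 0`. -/
theorem toeplitz_induced_hom_injective
    {M : Type*} [TopologicalSpace M] [CompactSpace M] [T2Space M]
    [MeasurableSpace M] [BorelSpace M]
    {A : ℕ → Type*} [∀ N, NormedRing (A N)] [∀ N, StarRing (A N)]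
    [∀ N, CStarRing (A N)] [∀ N, NormedAlgebra ℂ (A N)] [∀ N, CompleteSpace (A N)]
    [∀ N, StarModule ℂ (A N)] [∀ N, NormOneClass (A N)]
    (T : C(M, ℂ) →ₗ[ℂ] lp A ∞)
    (hTcontr : ∀ (f : C(M, ℂ)) (N : ℕ), ‖((T f : lp A ∞) : ∀ N, A N) N‖ ≤ ‖f‖)
    (hTstar : ∀ f : C(M, ℂ), T (star f) = star (T f))
    -- `f ↦ T(f) mod A₀` is a homomorphism: `T(f)T(g) − T(fg) ∈ A₀`
    (hTmul : ∀ f g : C(M, ℂ),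
      Filter.Tendsto
        (fun N => ‖((T f : lp A ∞) : ∀ N, A N) N * ((T g : lp A ∞) : ∀ N, A N) N
          - ((T (f * g) : lp A ∞) : ∀ N, A N) N‖)
        Filter.atTop (nhds 0))
    -- a strictly positive finite measure on `M`
    (μ : MeasureTheory.Measure M) [MeasureTheory.IsFiniteMeasure μ]
    (hμpos : ∀ U : Set M, IsOpen U → U.Nonempty → 0 < μ U)
    -- a state `tr∞` on the product algebra vanishing on `A₀`
    (tr : lp A ∞ →ₗ[ℂ] ℂ)
    (htr0 : ∀ a : lp A ∞,
      Filter.Tendsto (fun N => ‖(a : ∀ N, A N) N‖) Filter.atTop (nhds 0) → tr a = 0)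
    (htrT : ∀ f : C(M, ℂ),
      tr (T f) = ((μ Set.univ).toReal : ℂ)⁻¹ * ∫ x, f x ∂μ) :
    ∀ f : C(M, ℂ),
      Filter.Tendsto (fun N => ‖((T f : lp A ∞) : ∀ N, A N) N‖) Filter.atTop (nhds 0) →
      f = 0 := by
  intro f hf
  by_cases hM : Nonempty M
  · -- the measure is open-positive
    have hopen : μ.IsOpenPosMeasure :=
      ⟨fun U hU hne => (hμpos U hU hne).ne'⟩
    -- T (star f * f) tends to 0 componentwise
    have key : Filter.Tendsto
        (fun N => ‖((T (star f * f) : lp A ∞) : ∀ N, A N) N‖) Filter.atTop (nhds 0) := by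
      have h1 := hTmul (star f) f
      have h2 : Filter.Tendsto
          (fun N => ‖((T (star f) : lp A ∞) : ∀ N, A N) N * ((T f : lp A ∞) : ∀ N, A N) N‖)
          Filter.atTop (nhds 0) := by
        have hb : ∀ N, ‖((T (star f) : lp A ∞) : ∀ N, A N) N * ((T f : lp A ∞) : ∀ N, A N) N‖
            ≤ ‖f‖ * ‖((T f : lp A ∞) : ∀ N, A N) N‖ := by
          intro N
          calc ‖((T (star f) : lp A ∞) : ∀ N, A N) N * ((T f : lp A ∞) : ∀ N, A N) N‖
              ≤ ‖((T (star f) : lp A ∞) : ∀ N, A N) N‖ * ‖((T f : lp A ∞) : ∀ N, A N) N‖ :=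
                norm_mul_le _ _
            _ ≤ ‖f‖ * ‖((T f : lp A ∞) : ∀ N, A N) N‖ := by
                apply mul_le_mul_of_nonneg_right _ (norm_nonneg _)
                simpa [norm_star] using hTcontr (star f) N
        have := hf.const_mul ‖f‖
        rw [mul_zero] at this
        exact squeeze_zero (fun N => norm_nonneg _) hb this
      have h3 : Filter.Tendsto
          (fun N => ‖((T (star f) : lp A ∞) : ∀ N, A N) N * ((T f : lp A ∞) : ∀ N, A N) N‖
            + ‖((T (star f) : lp A ∞) : ∀ N, A N) N * ((T f : lp A ∞) : ∀ N, A N) N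
              - ((T (star f * f) : lp A ∞) : ∀ N, A N) N‖)
          Filter.atTop (nhds 0) := by
        simpa using h2.add h1
      refine squeeze_zero (fun N => norm_nonneg _) (fun N => ?_) h3
      calc ‖((T (star f * f) : lp A ∞) : ∀ N, A N) N‖
          = ‖((T (star f) : lp A ∞) : ∀ N, A N) N * ((T f : lp A ∞) : ∀ N, A N) N
              - (((T (star f) : lp A ∞) : ∀ N, A N) N * ((T f : lp A ∞) : ∀ N, A N) N
                - ((T (star f * f) : lp A ∞) : ∀ N, A N) N)‖ := by rw [sub_sub_cancel]
        _ ≤ _ := norm_sub_le _ _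
    -- hence tr (T (star f * f)) = 0
    have htr : tr (T (star f * f)) = 0 := htr0 _ key
    rw [htrT] at htr
    -- the normalization constant is nonzero
    have hμu : 0 < μ Set.univ := hμpos _ isOpen_univ (Set.univ_nonempty)
    have hc : (((μ Set.univ).toReal : ℂ))⁻¹ ≠ 0 := by
      simp only [ne_eq, inv_eq_zero, Complex.ofReal_eq_zero]
      exact (ENNReal.toReal_pos hμu.ne' (MeasureTheory.measure_ne_top μ _)).ne'
    have hint : (∫ x, (star f * f) x ∂μ) = 0 := by
      rcases mul_eq_zero.mp htr with h | h
      · exact absurd h hc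
      · exact h
    -- rewrite integral as a real integral of ‖f x‖ ^ 2
    have hre : (∫ x, (star f * f) x ∂μ) = ((∫ x, ‖f x‖ ^ 2 ∂μ : ℝ) : ℂ) := by
      have hfun : (fun x => (star f * f) x) = fun x => ((‖f x‖ ^ 2 : ℝ) : ℂ) := by
        ext x
        rw [ContinuousMap.mul_apply, ContinuousMap.star_apply]
        rw [Complex.star_def, Complex.conj_mul']
        push_cast
        rfl
      rw [hfun]
      exact integral_ofReal
    rw [hre, Complex.ofReal_eq_zero] at hint
    have hcont : Continuous fun x => ‖f x‖ ^ 2 := by fun_prop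
    have hInt : MeasureTheory.Integrable (fun x => ‖f x‖ ^ 2) μ :=
      hcont.integrable_of_hasCompactSupport
        (HasCompactSupport.of_compactSpace _)
    have hae : (fun x => ‖f x‖ ^ 2) =ᵐ[μ] 0 :=
      (MeasureTheory.integral_eq_zero_iff_of_nonneg
        (fun x => by positivity) hInt).mp hint
    have heq : (fun x => ‖f x‖ ^ 2) = (0 : M → ℝ) :=
      (Continuous.ae_eq_iff_eq μ hcont continuous_const).mp hae
    ext x
    have := congrFun heq x
    simp only [Pi.zero_apply, pow_eq_zero_iff, norm_eq_zero] at this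
    simpa using this
  · ext x
    exact absurd ⟨x⟩ hM
end

section
/- Let D₀ be a self-adjoint operator with Re-part inequality D₀² ≥ Nδ − C where δ ≥ 0 is a bounded self-adjoint operator and N, C > 0, and let B be a bounded self-adjoint operator. Set D = D₀ + iB. If ψ is a vector with δψ ≥ ψ (i.e., ⟨ψ, δψ⟩ ≥ ‖ψ‖²) and N > C + ‖B‖², then Re⟨ψ, D²ψ⟩ ≥ (N − C − ‖B‖²)‖ψ‖² > 0; in particular ψ ∉ ker D. -/
/-!
Since `D₀` and `B` are symmetric, `D₀ - iB` is adjoint to `D = D₀ + iB`, so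
`⟨D²ψ, ψ⟩ = ⟨Dψ, (D₀ - iB)ψ⟩`. The cross terms of this product are purely imaginary, hence
`Re⟨D²ψ, ψ⟩ = ‖D₀ψ‖² - ‖Bψ‖²`; the Weitzenböck bound on `‖D₀ψ‖²` together with
`‖Bψ‖ ≤ ‖B‖ ‖ψ‖` gives the estimate, whose left side is positive for `ψ ≠ 0`.
-/

open Complex ContinuousLinearMap
open scoped InnerProductSpace

section

variable {E : Type*} [NormedAddCommGroup E] [InnerProductSpace ℂ E]

theorem re_inner_add_I_smul_sub_I_smul (x y : E) :
    re ⟪x + I • y, x - I • y⟫_ℂ = ‖x‖ ^ 2 - ‖y‖ ^ 2 := by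
  have him : im ⟪y, x⟫_ℂ = -im ⟪x, y⟫_ℂ := by rw [← inner_conj_symm x y, conj_im, neg_neg]
  simp [inner_self_eq_norm_sq_to_K, mul_re, ← ofReal_pow, him]

theorem inner_add_I_smul_apply_left {T S : E →L[ℂ] E} (hT : (T : E →ₗ[ℂ] E).IsSymmetric)
    (hS : (S : E →ₗ[ℂ] E).IsSymmetric) (u v : E) :
    ⟪(T + I • S) u, v⟫_ℂ = ⟪u, (T - I • S) v⟫_ℂ := by
  simp only [add_apply, sub_apply, smul_apply, inner_add_left, inner_sub_right,
    inner_smul_left, inner_smul_right, conj_I]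
  rw [← coe_coe T, ← coe_coe S, hT, hS]
  ring

theorem re_inner_add_I_smul_sq_apply {T S : E →L[ℂ] E} (hT : (T : E →ₗ[ℂ] E).IsSymmetric)
    (hS : (S : E →ₗ[ℂ] E).IsSymmetric) (ψ : E) :
    re ⟪((T + I • S) * (T + I • S)) ψ, ψ⟫_ℂ = ‖T ψ‖ ^ 2 - ‖S ψ‖ ^ 2 := by
  rw [mul_apply_eq_comp, inner_add_I_smul_apply_left hT hS, add_apply, sub_apply, smul_apply,
    re_inner_add_I_smul_sub_I_smul]

end

theorem positive_degree_not_in_kernel_general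
    {H : Type*} [NormedAddCommGroup H] [InnerProductSpace ℂ H] [CompleteSpace H]
    (D₀ B δ : H →L[ℂ] H)
    (hD₀ : IsSelfAdjoint D₀) (hB : IsSelfAdjoint B)
    (N C : ℝ) (hNpos : 0 < N)
    -- `D₀² ≥ Nδ − C`
    (hWeitzenbock : ∀ φ : H,
      N * (inner ℂ (δ φ) φ : ℂ).re - C * ‖φ‖ ^ 2 ≤ (inner ℂ (D₀ φ) (D₀ φ) : ℂ).re)
    (hN : C + ‖B‖ ^ 2 < N)
    (ψ : H)
    -- `δψ ≥ ψ`, i.e. `⟨ψ, δψ⟩ ≥ ‖ψ‖²`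
    (hψ : ‖ψ‖ ^ 2 ≤ (inner ℂ (δ ψ) ψ : ℂ).re) :
    (N - C - ‖B‖ ^ 2) * ‖ψ‖ ^ 2 ≤
      (inner ℂ (((D₀ + Complex.I • B) * (D₀ + Complex.I • B)) ψ) ψ : ℂ).re ∧
    (ψ ≠ 0 → (D₀ + Complex.I • B) ψ ≠ 0) := by
  have hBψ : ‖B ψ‖ ^ 2 ≤ ‖B‖ ^ 2 * ‖ψ‖ ^ 2 := by
    rw [← mul_pow]
    exact pow_le_pow_left₀ (norm_nonneg _) (B.le_opNorm ψ) 2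
  have hD₀ψ : re ⟪D₀ ψ, D₀ ψ⟫_ℂ = ‖D₀ ψ‖ ^ 2 := inner_self_eq_norm_sq (𝕜 := ℂ) _
  have hlower : (N - C - ‖B‖ ^ 2) * ‖ψ‖ ^ 2 ≤ re ⟪((D₀ + I • B) * (D₀ + I • B)) ψ, ψ⟫_ℂ :=
    calc (N - C - ‖B‖ ^ 2) * ‖ψ‖ ^ 2
        ≤ N * re ⟪δ ψ, ψ⟫_ℂ - C * ‖ψ‖ ^ 2 - ‖B ψ‖ ^ 2 := by
          linarith [mul_le_mul_of_nonneg_left hψ hNpos.le]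
      _ ≤ ‖D₀ ψ‖ ^ 2 - ‖B ψ‖ ^ 2 := by linarith [hWeitzenbock ψ]
      _ = re ⟪((D₀ + I • B) * (D₀ + I • B)) ψ, ψ⟫_ℂ :=
          (re_inner_add_I_smul_sq_apply hD₀.isSymmetric hB.isSymmetric ψ).symm
  refine ⟨hlower, fun hψ0 hker => ?_⟩
  rw [mul_apply_eq_comp, hker, map_zero, inner_zero_left, zero_re] at hlower
  have hpos : 0 < (N - C - ‖B‖ ^ 2) * ‖ψ‖ ^ 2 := mul_pos (by linarith) (by positivity)
  linarith

/-- Vanishing estimate: let `D₀` be self-adjoint with `D₀² ≥ Nδ − C` for a bounded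
positive operator `δ`, `B` bounded self-adjoint, and `D = D₀ + iB`. If `⟨ψ, δψ⟩ ≥ ‖ψ‖²`
and `N > C + ‖B‖²`, then `Re⟨ψ, D²ψ⟩ ≥ (N − C − ‖B‖²)‖ψ‖² > 0`; in particular
`ψ ∉ ker D` when `ψ ≠ 0`. -/
theorem positive_degree_not_in_kernel
    {H : Type*} [NormedAddCommGroup H] [InnerProductSpace ℂ H] [CompleteSpace H]
    (D₀ B δ : H →L[ℂ] H)
    (hD₀ : IsSelfAdjoint D₀) (hB : IsSelfAdjoint B) (hδ : IsSelfAdjoint δ)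
    (N C : ℝ) (hCpos : 0 < C) (hNpos : 0 < N)
    -- `δ ≥ 0`
    (hδpos : ∀ φ : H, 0 ≤ (inner ℂ (δ φ) φ : ℂ).re)
    -- `D₀² ≥ Nδ − C`
    (hWeitzenbock : ∀ φ : H,
      N * (inner ℂ (δ φ) φ : ℂ).re - C * ‖φ‖ ^ 2 ≤ (inner ℂ (D₀ φ) (D₀ φ) : ℂ).re)
    (hN : C + ‖B‖ ^ 2 < N)
    (ψ : H)
    -- `δψ ≥ ψ`, i.e. `⟨ψ, δψ⟩ ≥ ‖ψ‖²`
    (hψ : ‖ψ‖ ^ 2 ≤ (inner ℂ (δ ψ) ψ : ℂ).re) :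
    (N - C - ‖B‖ ^ 2) * ‖ψ‖ ^ 2 ≤
      (inner ℂ (((D₀ + Complex.I • B) * (D₀ + Complex.I • B)) ψ) ψ : ℂ).re ∧
    (ψ ≠ 0 → (D₀ + Complex.I • B) ψ ≠ 0) :=
  positive_degree_not_in_kernel_general D₀ B δ hD₀ hB N C hNpos hWeitzenbock hN ψ hψ
end
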